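/- arXiv:2101.08383 — 4 statements merged into one kernel-verified Lean document; each statement's English description precedes it below -/
import Mathlib

section
/- The rank of the walk matrix W_G = (j, A j, A² j, …, A^{n-1} j) of a graph G on n vertices equals the number of distinct main eigenvalues of G, where a main eigenvalue is an eigenvalue whose eigenspace is not orthogonal to the all-ones vector j. -/
open Matrix Polynomial

/-- `μ` is a main eigenvalue of the matrix `A`: there is an eigenvector of `A`
for `μ` which is not orthogonal to the all-ones vector. -/
def Matrix.IsMainEig {n : ℕ} (A : Matrix (Fin n) (Fin n) ℝ) (μ : ℝ) : Prop :=
  ∃ v : Fin n → ℝ, A *ᵥ v = μ • v ∧ v ⬝ᵥ (fun _ => (1 : ℝ)) ≠ 0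

/-!
Diagonalise `A = U D Uᵀ` with `U` orthogonal and let `c = Uᵀ j` be the coordinates of `j` in the
eigenbasis. Then `A^k j = U (c_i λ_i^k)_i`, so `W = U M` with `M i k = c_i λ_i^k`, and
`rank W = rank M`. The rows of `M` with `c_i = 0` vanish and the others are nonzero multiples of
the Vandermonde rows `(λ^k)_k`, which are independent for distinct `λ`; hence `rank M` counts the
distinct `λ_i` with `c_i ≠ 0`. These are exactly the main eigenvalues: writing an eigenvector `v`
for `μ` as `U d`, we have `d_i = 0` unless `λ_i = μ`, and `v ⬝ j = d ⬝ c`.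
-/

open Finset

namespace Matrix

variable {K ι : Type*} [Field K] [Fintype ι]

theorem linearIndependent_pow_of_injective {v : ι → K} (hv : Function.Injective v) {m : ℕ}
    (hm : Fintype.card ι ≤ m) : LinearIndependent K fun i (k : Fin m) => v i ^ (k : ℕ) := by
  rw [Fintype.linearIndependent_iff]
  intro g hg i
  let e := Fintype.equivFin ι
  have hge : g ∘ e.symm = 0 := by
    refine eq_zero_of_forall_pow_sum_mul_pow_eq_zero (hv.comp e.symm.injective) fun k => ?_
    simpa [e.symm.sum_comp fun j => g j * v j ^ (k : ℕ)] using congrFun hg (Fin.castLE hm k)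
  simpa using congrFun hge (e i)

theorem rank_of_mul_pow [DecidableEq K] (c v : ι → K) {m : ℕ} (hm : Fintype.card ι ≤ m) :
    (of fun i (k : Fin m) => c i * v i ^ (k : ℕ)).rank =
      (({i | c i ≠ 0} : Finset ι).image v).card := by
  set M := of fun i (k : Fin m) => c i * v i ^ (k : ℕ)
  set Λ := ({i | c i ≠ 0} : Finset ι).image v
  let pows : K → Fin m → K := fun x k => x ^ (k : ℕ)
  have hrow : ∀ i, M.row i = c i • pows (v i) := fun i => rfl
  rw [rank_eq_finrank_span_row]
  apply le_antisymm
  · calc _ ≤ Module.finrank K (Submodule.span K (Λ.image pows : Set (Fin m → K))) := by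
          refine Submodule.finrank_mono (Submodule.span_le.2 ?_)
          rintro _ ⟨i, rfl⟩
          rw [hrow]
          by_cases hc : c i = 0
          · simp [hc]
          · exact Submodule.smul_mem _ _
              (Submodule.subset_span (mem_image_of_mem pows (mem_image_of_mem v (by simpa))))
      _ ≤ (Λ.image pows).card := finrank_span_finset_le_card _
      _ ≤ Λ.card := card_image_le
  · have hind : LinearIndependent K fun x : Λ => pows x :=
      linearIndependent_pow_of_injective Subtype.val_injective
        ((Fintype.card_coe Λ).trans_le ((card_image_le.trans (card_le_univ _)).trans hm))
    rw [← Fintype.card_coe Λ, ← finrank_span_eq_card hind]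
    refine Submodule.finrank_mono (Submodule.span_le.2 ?_)
    rintro _ ⟨⟨x, hx⟩, rfl⟩
    obtain ⟨i, hi, rfl⟩ := mem_image.1 hx
    have hc : c i ≠ 0 := by simpa using hi
    have hpows : pows (v i) = (c i)⁻¹ • M.row i := by
      rw [hrow, smul_smul, inv_mul_cancel₀ hc, one_smul]
    change pows (v i) ∈ _
    rw [hpows]
    exact Submodule.smul_mem _ _ (Submodule.subset_span ⟨i, rfl⟩)

end Matrix

namespace Matrix.IsHermitian

variable {𝕜 n : Type*} [RCLike 𝕜] [Fintype n] [DecidableEq n] {A : Matrix n n 𝕜}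

theorem mul_eigenvectorUnitary (hA : A.IsHermitian) :
    A * (hA.eigenvectorUnitary : Matrix n n 𝕜) =
      hA.eigenvectorUnitary * diagonal (RCLike.ofReal ∘ hA.eigenvalues : n → 𝕜) := by
  conv_lhs => arg 1; rw [hA.spectral_theorem]
  rw [Unitary.conjStarAlgAut_apply, mul_assoc, Unitary.coe_star_mul_self, mul_one]

theorem pow_mul_eigenvectorUnitary (hA : A.IsHermitian) (k : ℕ) :
    A ^ k * (hA.eigenvectorUnitary : Matrix n n 𝕜) =
      hA.eigenvectorUnitary * diagonal (RCLike.ofReal ∘ hA.eigenvalues : n → 𝕜) ^ k :=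
  (SemiconjBy.pow_right hA.mul_eigenvectorUnitary.symm k).symm

theorem pow_mulVec (hA : A.IsHermitian) (k : ℕ) (x : n → 𝕜) :
    A ^ k *ᵥ x = (hA.eigenvectorUnitary : Matrix n n 𝕜) *ᵥ fun i =>
      (hA.eigenvalues i : 𝕜) ^ k * (star (hA.eigenvectorUnitary : Matrix n n 𝕜) *ᵥ x) i := by
  conv_lhs => rw [← one_mulVec x, ← Unitary.coe_mul_star_self hA.eigenvectorUnitary]
  rw [← mulVec_mulVec, mulVec_mulVec _ (A ^ k), pow_mul_eigenvectorUnitary, ← mulVec_mulVec,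
    diagonal_pow]
  congr 1
  funext i
  rw [mulVec_diagonal]
  rfl

theorem of_pow_mulVec_eq_eigenvectorUnitary_mul (hA : A.IsHermitian) (m : ℕ) (x : n → 𝕜) :
    (of fun a (k : Fin m) => (A ^ (k : ℕ) *ᵥ x) a) =
      (hA.eigenvectorUnitary : Matrix n n 𝕜) * of fun i (k : Fin m) =>
        (star (hA.eigenvectorUnitary : Matrix n n 𝕜) *ᵥ x) i *
          (hA.eigenvalues i : 𝕜) ^ (k : ℕ) := by
  ext a k
  rw [of_apply, hA.pow_mulVec, mul_apply]
  simp only [mulVec, dotProduct, of_apply, mul_comm]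

end Matrix.IsHermitian

theorem Matrix.IsHermitian.isMainEig_iff {n : ℕ} {A : Matrix (Fin n) (Fin n) ℝ}
    (hA : A.IsHermitian) {μ : ℝ} :
    A.IsMainEig μ ↔ ∃ i, (star (hA.eigenvectorUnitary : Matrix (Fin n) (Fin n) ℝ) *ᵥ
      fun _ => 1) i ≠ 0 ∧ hA.eigenvalues i = μ := by
  set U : Matrix (Fin n) (Fin n) ℝ := ↑hA.eigenvectorUnitary with hU
  have hU₁ : star U * U = 1 := Unitary.star_mul_self_of_mem hA.eigenvectorUnitary.2
  have hU₂ : U * star U = 1 := Unitary.mul_star_self_of_mem hA.eigenvectorUnitary.2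
  have hUt : star U = Uᵀ := conjTranspose_eq_transpose_of_trivial U
  constructor
  · rintro ⟨v, hv, hvj⟩
    set d := star U *ᵥ v
    have hvd : v = U *ᵥ d := by rw [mulVec_mulVec, hU₂, one_mulVec]
    have heig : (fun i => hA.eigenvalues i * d i) = μ • d := by
      have h := congrArg (star U *ᵥ ·) (hA.pow_mulVec 1 v)
      simpa only [← hU, pow_one, hv, mulVec_smul, mulVec_mulVec, hU₁, one_mulVec,
        RCLike.ofReal_real_eq_id, id] using h.symm
    rw [hvd, dotProduct_comm, ← dotProduct_transpose_mulVec, ← hUt] at hvj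
    obtain ⟨i, -, hi⟩ := exists_ne_zero_of_sum_ne_zero hvj
    refine ⟨i, right_ne_zero_of_mul hi, mul_right_cancel₀ (left_ne_zero_of_mul hi) ?_⟩
    simpa using congrFun heig i
  · rintro ⟨i, hc, rfl⟩
    refine ⟨hA.eigenvectorBasis i, hA.mulVec_eigenvectorBasis i, ?_⟩
    rwa [← hA.eigenvectorUnitary_mulVec, dotProduct_comm, ← dotProduct_transpose_mulVec, ← hUt,
      single_one_dotProduct]

/-- The rank of the walk matrix `(j, Aj, A²j, …, A^{n-1}j)` of a graph `G` on `n`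
vertices equals the number of distinct main eigenvalues of `G`. -/
theorem rank_walkMatrix_eq_card_mainEig {n : ℕ} (G : SimpleGraph (Fin n))
    [DecidableRel G.Adj] (A : Matrix (Fin n) (Fin n) ℝ) (hA : A = G.adjMatrix ℝ)
    (W : Matrix (Fin n) (Fin n) ℝ)
    (hW : ∀ a k, W a k = ((A ^ (k : ℕ)) *ᵥ (fun _ => (1 : ℝ))) a) :
    W.rank = {μ : ℝ | A.IsMainEig μ}.ncard := by
  have hH : A.IsHermitian := hA ▸ isHermitian_iff_isSymm.2 G.isSymm_adjMatrix
  set c := star (hH.eigenvectorUnitary : Matrix (Fin n) (Fin n) ℝ) *ᵥ fun _ => (1 : ℝ)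
  have hWU : W =
      hH.eigenvectorUnitary * of fun i (k : Fin n) => c i * hH.eigenvalues i ^ (k : ℕ) := by
    have h := hH.of_pow_mulVec_eq_eigenvectorUnitary_mul n fun _ => (1 : ℝ)
    simp only [RCLike.ofReal_real_eq_id, id] at h
    exact (ext hW).trans h
  have hmain : {μ : ℝ | A.IsMainEig μ} =
      (({i | c i ≠ 0} : Finset (Fin n)).image hH.eigenvalues : Set ℝ) := by
    ext μ
    simp [hH.isMainEig_iff, c]
  rw [hWU, rank_mul_eq_right_of_isUnit_det _ _ (UnitaryGroup.det_isUnit _),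
    rank_of_mul_pow _ _ (Fintype.card_fin n).le, hmain, Set.ncard_coe_finset]
end

section
/- For every polynomial f with rational coefficients, f(A(G)) j = 0 if and only if the main characteristic polynomial m_G divides f in ℚ[x]. -/
/-!
If `v` is an eigenvector of the symmetric matrix `A` with eigenvalue `μ`, then
`v ⬝ p(A) w = p(μ) (v ⬝ w)` because `p(A)` is again symmetric. So `p(A) j = 0` forces `p(μ) = 0`
at every main eigenvalue; conversely, if `p` vanishes at the main eigenvalues then `p(A) j` is
orthogonal to an orthonormal eigenbasis of `A`, hence zero. Vanishing at the distinct main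
eigenvalues means divisibility by their product `m_G` in `ℝ[x]`, and divisibility by a polynomial
of `ℚ[x]` is the same in `ℚ[x]` and in `ℝ[x]`.
-/

open Matrix Polynomial

namespace Matrix

variable {ι R : Type*} [Fintype ι] [DecidableEq ι]

theorem IsSymm.aeval [CommSemiring R] {A : Matrix ι ι R} (hA : A.IsSymm) (p : R[X]) :
    (aeval A p).IsSymm := by
  simp only [IsSymm, aeval_eq_sum_range, transpose_sum, transpose_smul, transpose_pow, hA.eq]

theorem aeval_mulVec_of_mulVec_eq_smul [CommRing R] {A : Matrix ι ι R} {v : ι → R} {μ : R}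
    (hv : A *ᵥ v = μ • v) (p : R[X]) : aeval A p *ᵥ v = p.eval μ • v := by
  rcases eq_or_ne v 0 with rfl | hv0
  · simp
  have hv' : Module.End.HasEigenvector (toLin' A) μ v :=
    ⟨Module.End.mem_eigenspace_iff.mpr (by rwa [toLin'_apply]), hv0⟩
  rw [← toLinAlgEquiv'_apply, ← aeval_algHom_apply]
  exact Module.End.aeval_apply_of_hasEigenvector hv'

theorem IsSymm.dotProduct_aeval_mulVec [CommRing R] {A : Matrix ι ι R} (hA : A.IsSymm)
    {v : ι → R} {μ : R} (hv : A *ᵥ v = μ • v) (p : R[X]) (w : ι → R) :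
    v ⬝ᵥ (Polynomial.aeval A p *ᵥ w) = p.eval μ * (v ⬝ᵥ w) := by
  rw [dotProduct_mulVec, ← mulVec_transpose, (hA.aeval p).eq,
    aeval_mulVec_of_mulVec_eq_smul hv, smul_dotProduct, smul_eq_mul]

omit [DecidableEq ι] in
theorem _root_.OrthonormalBasis.eq_zero_of_forall_dotProduct_eq_zero
    (b : OrthonormalBasis ι ℝ (EuclideanSpace ℝ ι)) {u : ι → ℝ}
    (h : ∀ i, ⇑(b i) ⬝ᵥ u = 0) : u = 0 := by
  have hb : WithLp.toLp 2 u = 0 := by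
    rw [← b.sum_repr' (WithLp.toLp 2 u)]
    refine Finset.sum_eq_zero fun i _ => ?_
    rw [EuclideanSpace.inner_eq_star_dotProduct, star_trivial, dotProduct_comm, h, zero_smul]
  simpa using congrArg WithLp.ofLp hb

theorem IsHermitian.aeval_mulVec_eq_zero_iff {A : Matrix ι ι ℝ} (hA : A.IsHermitian)
    (p : ℝ[X]) (w : ι → ℝ) :
    aeval A p *ᵥ w = 0 ↔ ∀ μ, (∃ v, A *ᵥ v = μ • v ∧ v ⬝ᵥ w ≠ 0) → p.eval μ = 0 := by
  have hsymm : A.IsSymm := isHermitian_iff_isSymm.mp hA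
  constructor
  · rintro h μ ⟨v, hv, hvw⟩
    have key := hsymm.dotProduct_aeval_mulVec hv p w
    rw [h, dotProduct_zero, eq_comm, mul_eq_zero] at key
    exact key.resolve_right hvw
  · intro h
    refine hA.eigenvectorBasis.eq_zero_of_forall_dotProduct_eq_zero fun i => ?_
    have hv := hA.mulVec_eigenvectorBasis i
    rw [hsymm.dotProduct_aeval_mulVec hv]
    by_cases hvw : ⇑(hA.eigenvectorBasis i) ⬝ᵥ w = 0
    · rw [hvw, mul_zero]
    · rw [h _ ⟨_, hv, hvw⟩, zero_mul]

end Matrix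

namespace Polynomial

theorem prod_X_sub_C_dvd_iff {K : Type*} [Field K] (S : Finset K) (p : K[X]) :
    ∏ μ ∈ S, (X - C μ) ∣ p ↔ ∀ μ ∈ S, p.IsRoot μ := by
  refine ⟨fun h μ hμ =>
    dvd_iff_isRoot.mp ((Finset.dvd_prod_of_mem (fun a => X - C a) hμ).trans h),
    fun h => Finset.prod_dvd_of_coprime ?_ fun μ hμ => dvd_iff_isRoot.mpr (h μ hμ)⟩
  exact (pairwise_coprime_X_sub_C Function.injective_id).set_pairwise _

theorem dvd_iff_forall_isRoot_map_of_map_eq_prod {K L : Type*} [Field K] [Field L] [Algebra K L]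
    {m : K[X]} {S : Finset L} (hm : m.map (algebraMap K L) = ∏ μ ∈ S, (X - C μ)) (f : K[X]) :
    m ∣ f ↔ ∀ μ ∈ S, (f.map (algebraMap K L)).IsRoot μ := by
  rw [← map_dvd_map' (algebraMap K L), hm, prod_X_sub_C_dvd_iff]

end Polynomial

/-- For every polynomial `f ∈ ℚ[x]`, `f(A(G)) j = 0` iff the main characteristic
polynomial `m_G` (which has rational coefficients) divides `f` in `ℚ[x]`. -/
theorem aeval_ones_eq_zero_iff_mainCharPoly_dvd {n : ℕ} (G : SimpleGraph (Fin n))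
    [DecidableRel G.Adj] (A : Matrix (Fin n) (Fin n) ℝ) (hA : A = G.adjMatrix ℝ)
    (S : Finset ℝ) (hS : ∀ μ, μ ∈ S ↔ A.IsMainEig μ)
    (mG : Polynomial ℚ) (hm : mG.map (algebraMap ℚ ℝ) = ∏ μ ∈ S, (X - C μ))
    (f : Polynomial ℚ) :
    (aeval A (f.map (algebraMap ℚ ℝ))) *ᵥ (fun _ => (1 : ℝ)) = 0 ↔ mG ∣ f := by
  have hAherm : A.IsHermitian := hA ▸ G.isHermitian_adjMatrix ℝ
  rw [hAherm.aeval_mulVec_eq_zero_iff, dvd_iff_forall_isRoot_map_of_map_eq_prod hm]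
  exact forall_congr' fun μ => by rw [hS]; rfl
end

section
/- Let G be the H-join of graphs G_1,…,G_p, where H has vertex set {1,…,p}. If μ is an eigenvalue of G_i and u is an eigenvector of A(G_i) for μ with jᵀu = 0 (the sum of entries of u is zero), then the vector obtained by placing u in the block of coordinates corresponding to G_i and zeros elsewhere is an eigenvector of A(G) with eigenvalue μ. -/
/-! For `v` supported on block `i`, the `k`-th block of `A(G) v` is `A(G_i) u = μ u` when `k = i`;
for `k ≠ i` the block `(k, i)` of `A(G)` is the constant matrix `A(H)_{ki} J`, so that block
of `A(G) v` is `A(H)_{ki} (jᵀu) j = 0`. -/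

open Matrix

/-- The `H`-join of the family of graphs `G i`. -/
def SimpleGraph.hJoin {p : ℕ} (H : SimpleGraph (Fin p)) (n : Fin p → ℕ)
    (G : ∀ i, SimpleGraph (Fin (n i))) : SimpleGraph ((i : Fin p) × Fin (n i)) where
  Adj x y := if h : x.1 = y.1 then (G x.1).Adj x.2 (Fin.cast (congrArg n h.symm) y.2)
             else H.Adj x.1 y.1
  symm := by
    constructor
    rintro ⟨i, a⟩ ⟨k, b⟩ hadj
    dsimp at *
    by_cases h : i = k
    · subst h
      rw [dif_pos rfl] at hadj ⊢
      simpa using ((G i).symm.symm _ _ (by simpa using hadj))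
    · rw [dif_neg h] at hadj
      rw [dif_neg (Ne.symm h)]
      exact H.symm.symm _ _ hadj
  loopless := by
    constructor
    rintro ⟨i, a⟩ h
    rw [dif_pos rfl] at h
    simp at h

noncomputable instance {p : ℕ} (H : SimpleGraph (Fin p)) (n : Fin p → ℕ)
    (G : ∀ i, SimpleGraph (Fin (n i))) : DecidableRel (H.hJoin n G).Adj :=
  Classical.decRel _

theorem Matrix.mulVec_sigma_apply_of_eq_zero_off_fiber {m ι R : Type*} [Fintype ι]
    [DecidableEq ι] {α : ι → Type*} [∀ i, Fintype (α i)] [NonUnitalNonAssocSemiring R]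
    (M : Matrix m (Σ i, α i) R) {v : (Σ i, α i) → R} (i : ι)
    (hv : ∀ k a, k ≠ i → v ⟨k, a⟩ = 0) (x : m) :
    (M *ᵥ v) x = ∑ a, M x ⟨i, a⟩ * v ⟨i, a⟩ := by
  rw [mulVec, dotProduct, Fintype.sum_sigma]
  refine Finset.sum_eq_single i (fun k _ hk => ?_) (by simp)
  simp [hv k _ hk]

namespace SimpleGraph

variable {p : ℕ} (H : SimpleGraph (Fin p)) (n : Fin p → ℕ) (G : ∀ i, SimpleGraph (Fin (n i)))

theorem hJoin_adj_mk_same {i : Fin p} {a b : Fin (n i)} :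
    (H.hJoin n G).Adj ⟨i, a⟩ ⟨i, b⟩ ↔ (G i).Adj a b := by
  simp [hJoin]

theorem hJoin_adj_mk_of_ne {k i : Fin p} (hki : k ≠ i) {a : Fin (n k)} {b : Fin (n i)} :
    (H.hJoin n G).Adj ⟨k, a⟩ ⟨i, b⟩ ↔ H.Adj k i := by
  simp [hJoin, hki]

theorem hJoin_adjMatrix_apply_mk_same {R : Type*} [Zero R] [One R]
    [∀ i, DecidableRel (G i).Adj] (i : Fin p) (a b : Fin (n i)) :
    (H.hJoin n G).adjMatrix R ⟨i, a⟩ ⟨i, b⟩ = (G i).adjMatrix R a b := by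
  simp only [adjMatrix_apply, hJoin_adj_mk_same]

theorem hJoin_adjMatrix_apply_mk_of_ne {R : Type*} [Zero R] [One R] [DecidableRel H.Adj]
    {k i : Fin p} (hki : k ≠ i) (a : Fin (n k)) (b : Fin (n i)) :
    (H.hJoin n G).adjMatrix R ⟨k, a⟩ ⟨i, b⟩ = H.adjMatrix R k i := by
  simp only [adjMatrix_apply, hJoin_adj_mk_of_ne H n G hki]

end SimpleGraph

/-- If `u` is an eigenvector of `A(G_i)` for `μ` whose entries sum to zero, then
placing `u` in the `i`-th block and zeros elsewhere gives an eigenvector of the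
adjacency matrix of the `H`-join, for the same eigenvalue `μ`. -/
theorem hJoin_eigenvector_of_sum_zero {p : ℕ} (H : SimpleGraph (Fin p))
    (n : Fin p → ℕ) (G : ∀ i, SimpleGraph (Fin (n i))) [∀ i, DecidableRel (G i).Adj]
    (i : Fin p) (μ : ℝ) (u : Fin (n i) → ℝ) (hu0 : u ≠ 0)
    (huEig : (G i).adjMatrix ℝ *ᵥ u = μ • u)
    (huSum : u ⬝ᵥ (fun _ => (1 : ℝ)) = 0)
    (v : ((k : Fin p) × Fin (n k)) → ℝ)
    (hv : ∀ x, v x = if h : x.1 = i then u (Fin.cast (congrArg n h) x.2) else 0) :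
    v ≠ 0 ∧ (H.hJoin n G).adjMatrix ℝ *ᵥ v = μ • v := by
  have hv_mk : ∀ c, v ⟨i, c⟩ = u c := fun c => by simp [hv]
  have hv_off : ∀ k a, k ≠ i → v ⟨k, a⟩ = 0 := fun k a hk => by simp [hv, hk]
  have hu_sum : ∑ c, u c = 0 := by simpa [dotProduct] using huSum
  refine ⟨fun hv0 => hu0 (funext fun c => by simpa [hv_mk] using congrFun hv0 ⟨i, c⟩), ?_⟩
  ext ⟨k, b⟩
  rw [mulVec_sigma_apply_of_eq_zero_off_fiber _ i hv_off]
  simp_rw [hv_mk]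
  by_cases hki : k = i
  · subst hki
    simp only [SimpleGraph.hJoin_adjMatrix_apply_mk_same]
    rw [Pi.smul_apply, hv_mk, ← Pi.smul_apply, ← huEig]
    rfl
  · classical
    simp_rw [SimpleGraph.hJoin_adjMatrix_apply_mk_of_ne H n G hki]
    rw [← Finset.mul_sum, hu_sum, mul_zero, Pi.smul_apply, hv_off k b hki, smul_zero]
end

section
/- The coefficient vector (c_0,…,c_{s−1}) of the main characteristic polynomial m_G(x) = x^s − c_{s−1}x^{s−1} − ⋯ − c_0 is the unique solution of the linear system W_G x = A(G)^s j, where W_G is the walk matrix of G. -/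
open Matrix Polynomial

/-- The coefficient vector `(c_0, …, c_{s-1})` of the main characteristic polynomial
`m_G(x) = x^s - c_{s-1}x^{s-1} - ⋯ - c_0` is the unique solution of the linear
system `W_G x = A(G)^s j`, where `W_G` is the walk matrix of `G`. -/
theorem mainCharPoly_coefficients_unique_solution {n : ℕ} (G : SimpleGraph (Fin n))
    [DecidableRel G.Adj] (A : Matrix (Fin n) (Fin n) ℝ) (hA : A = G.adjMatrix ℝ)
    (j : Fin n → ℝ) (hj : j = fun _ => (1 : ℝ))
    (S : Finset ℝ) (hS : ∀ μ, μ ∈ S ↔ A.IsMainEig μ)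
    (s : ℕ) (hs : s = S.card)
    (W : Matrix (Fin n) (Fin s) ℝ) (hW : ∀ a k, W a k = ((A ^ (k : ℕ)) *ᵥ j) a)
    (c : Fin s → ℝ)
    (hc : ∏ μ ∈ S, (X - C μ) = X ^ s - ∑ k : Fin s, C (c k) * X ^ (k : ℕ)) :
    W *ᵥ c = (A ^ s) *ᵥ j ∧ ∀ x : Fin s → ℝ, W *ᵥ x = (A ^ s) *ᵥ j → x = c := by
  classical
  have hH : A.IsHermitian := by
    subst hA
    ext i k
    simp [Matrix.conjTranspose_apply, SimpleGraph.adjMatrix_apply, SimpleGraph.adj_comm]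
  set U : Matrix (Fin n) (Fin n) ℝ := (hH.eigenvectorUnitary : Matrix (Fin n) (Fin n) ℝ)
    with hUdef
  set lam : Fin n → ℝ := hH.eigenvalues with hlamdef
  have hUU : star U * U = 1 := Matrix.mem_unitaryGroup_iff'.mp hH.eigenvectorUnitary.2
  have hUU' : U * star U = 1 := Matrix.mem_unitaryGroup_iff.mp hH.eigenvectorUnitary.2
  have hspec : A = U * diagonal lam * star U := by
    have h := hH.spectral_theorem
    rwa [RCLike.ofReal_real_eq_id, Function.id_comp] at h
  set e : Fin n → ℝ := star U *ᵥ j with hedef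
  -- powers of A in the eigenbasis
  have hpow : ∀ k : ℕ, A ^ k = U * diagonal (fun i => lam i ^ k) * star U := by
    intro k
    induction k with
    | zero => simp [pow_zero, hUU']
    | succ k ih =>
      rw [pow_succ, ih]
      conv_lhs => rw [hspec]
      rw [show U * diagonal (fun i => lam i ^ k) * star U * (U * diagonal lam * star U)
          = U * (diagonal (fun i => lam i ^ k) * ((star U * U) * diagonal lam)) * star U by
        simp only [Matrix.mul_assoc]]
      rw [hUU, one_mul, diagonal_mul_diagonal]
      simp only [← pow_succ]
  have hAk : ∀ k : ℕ, (A ^ k) *ᵥ j = U *ᵥ fun i => lam i ^ k * e i := by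
    intro k
    have hd : (diagonal fun i => lam i ^ k) *ᵥ e = fun i => lam i ^ k * e i := by
      funext i
      rw [Matrix.mulVec_diagonal]
    rw [hpow k, ← Matrix.mulVec_mulVec, ← Matrix.mulVec_mulVec, ← hedef, hd]
  have hUinj : ∀ v : Fin n → ℝ, U *ᵥ v = 0 → v = 0 := by
    intro v hv
    have := congrArg (fun w => star U *ᵥ w) hv
    simpa [Matrix.mulVec_mulVec, hUU] using this
  -- dot products with j move to the eigenbasis
  have hdot : ∀ w : Fin n → ℝ, (U *ᵥ w) ⬝ᵥ j = w ⬝ᵥ e := by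
    intro w
    simp only [hedef, Matrix.mulVec, dotProduct, Matrix.star_eq_conjTranspose,
      Matrix.conjTranspose_apply, star_trivial, Finset.sum_mul, Finset.mul_sum]
    rw [Finset.sum_comm]
    exact Finset.sum_congr rfl fun i _ => Finset.sum_congr rfl fun a _ => by ring
  -- characterization of main eigenvalues
  have hmain : ∀ μ : ℝ, A.IsMainEig μ ↔ ∃ i, e i ≠ 0 ∧ lam i = μ := by
    intro μ
    constructor
    · rintro ⟨v, hv, hvj⟩
      rw [← hj] at hvj
      set w : Fin n → ℝ := star U *ᵥ v with hwdef
      have hvw : U *ᵥ w = v := by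
        rw [hwdef, Matrix.mulVec_mulVec, hUU', Matrix.one_mulVec]
      have hDw : ∀ i, lam i * w i = μ * w i := by
        have h1 : U *ᵥ (diagonal lam *ᵥ w) = μ • (U *ᵥ w) := by
          calc U *ᵥ (diagonal lam *ᵥ w)
              = (U * diagonal lam) *ᵥ (star U *ᵥ v) := by
                rw [Matrix.mulVec_mulVec, hwdef]
            _ = (U * diagonal lam * star U) *ᵥ v := Matrix.mulVec_mulVec v _ _
            _ = A *ᵥ v := by rw [← hspec]
            _ = μ • v := hv
            _ = μ • (U *ᵥ w) := by rw [hvw]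
        have h2 : U *ᵥ (diagonal lam *ᵥ w - μ • w) = 0 := by
          rw [Matrix.mulVec_sub, Matrix.mulVec_smul, h1, sub_self]
        have h3 := hUinj _ h2
        intro i
        have := congrFun h3 i
        simpa [Matrix.mulVec_diagonal, sub_eq_zero] using this
      have hwe : w ⬝ᵥ e ≠ 0 := by
        rw [← hdot w, hvw]; exact hvj
      have hex : ∃ i, w i * e i ≠ 0 := by
        by_contra h
        push_neg at h
        exact hwe (by simp [dotProduct, h])
      obtain ⟨i, hi⟩ := hex
      have hwi : w i ≠ 0 := fun h => hi (by rw [h, zero_mul])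
      have hei : e i ≠ 0 := fun h => hi (by rw [h, mul_zero])
      exact ⟨i, hei, mul_right_cancel₀ hwi (hDw i)⟩
    · rintro ⟨i, hei, hlami⟩
      refine ⟨U *ᵥ Pi.single i 1, ?_, ?_⟩
      · rw [hspec]
        calc (U * diagonal lam * star U) *ᵥ (U *ᵥ Pi.single i 1)
            = (U * diagonal lam * star U * U) *ᵥ Pi.single i 1 :=
              Matrix.mulVec_mulVec _ _ _
          _ = (U * diagonal lam) *ᵥ Pi.single i 1 := by
              rw [Matrix.mul_assoc (U * diagonal lam), hUU, mul_one]
          _ = U *ᵥ (diagonal lam *ᵥ Pi.single i 1) := (Matrix.mulVec_mulVec _ _ _).symm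
          _ = U *ᵥ Pi.single i (lam i) := by rw [Matrix.diagonal_mulVec_single, mul_one]
          _ = μ • (U *ᵥ Pi.single i 1) := by
              rw [← Matrix.mulVec_smul]
              have hsingle : Pi.single i (lam i) = μ • (Pi.single i 1 : Fin n → ℝ) := by
                funext a
                by_cases h : a = i
                · subst h; simp [hlami]
                · simp [Pi.single_apply, h]
              rw [hsingle]
      · rw [← hj, hdot, single_dotProduct, one_mul]
        exact hei
  have hSset : ∀ μ : ℝ, μ ∈ S ↔ ∃ i, e i ≠ 0 ∧ lam i = μ :=
    fun μ => (hS μ).trans (hmain μ)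
  -- the main polynomial vanishes at eigenvalues with nonzero main component
  have hval : ∀ i, e i ≠ 0 → lam i ^ s - ∑ k : Fin s, c k * lam i ^ (k : ℕ) = 0 := by
    intro i hi
    have hmem : lam i ∈ S := (hSset _).2 ⟨i, hi, rfl⟩
    have h0 : ∏ μ ∈ S, (lam i - μ) = 0 := Finset.prod_eq_zero hmem (sub_self _)
    have h1 := congrArg (Polynomial.eval (lam i)) hc
    simp only [eval_prod, eval_sub, eval_pow, eval_X, eval_C, eval_finset_sum, eval_mul] at h1
    rw [← h1]
    exact h0
  -- the action of W in the eigenbasis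
  have hWd : ∀ d : Fin s → ℝ,
      W *ᵥ d = U *ᵥ fun i => (∑ k : Fin s, d k * lam i ^ (k : ℕ)) * e i := by
    intro d
    funext a
    have hWa : ∀ k : Fin s, W a k = ∑ i, U a i * (lam i ^ (k : ℕ) * e i) := by
      intro k
      rw [hW, hAk]
      rfl
    show ∑ k, W a k * d k = ∑ i, U a i * ((∑ k : Fin s, d k * lam i ^ (k : ℕ)) * e i)
    simp_rw [hWa, Finset.sum_mul, Finset.mul_sum]
    rw [Finset.sum_comm]
    exact Finset.sum_congr rfl fun i _ => Finset.sum_congr rfl fun k _ => by ring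
  have h1 : W *ᵥ c = (A ^ s) *ᵥ j := by
    rw [hWd, hAk]
    have hfe : (fun i => (∑ k : Fin s, c k * lam i ^ (k : ℕ)) * e i)
        = fun i => lam i ^ s * e i := by
      funext i
      by_cases hi : e i = 0
      · rw [hi, mul_zero, mul_zero]
      · have h := hval i hi
        have h2 : ∑ k : Fin s, c k * lam i ^ (k : ℕ) = lam i ^ s := by linarith
        rw [h2]
    rw [hfe]
  refine ⟨h1, ?_⟩
  intro x hx
  have hzero : U *ᵥ (fun i => (∑ k : Fin s, (x k - c k) * lam i ^ (k : ℕ)) * e i) = 0 := by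
    have hsub : W *ᵥ x - W *ᵥ c = 0 := by rw [hx, h1, sub_self]
    rw [hWd, hWd, ← Matrix.mulVec_sub] at hsub
    have hfe : ((fun i => (∑ k : Fin s, x k * lam i ^ (k : ℕ)) * e i)
        - fun i => (∑ k : Fin s, c k * lam i ^ (k : ℕ)) * e i)
        = fun i => (∑ k : Fin s, (x k - c k) * lam i ^ (k : ℕ)) * e i := by
      funext i
      simp only [Pi.sub_apply, ← sub_mul]
      congr 1
      rw [← Finset.sum_sub_distrib]
      exact Finset.sum_congr rfl fun k _ => (sub_mul _ _ _).symm
    rw [hfe] at hsub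
    exact hsub
  have hz : ∀ i, (∑ k : Fin s, (x k - c k) * lam i ^ (k : ℕ)) * e i = 0 :=
    fun i => congrFun (hUinj _ hzero) i
  rcases Nat.eq_zero_or_pos s with hs0 | hs0
  · subst hs0
    funext k
    exact k.elim0
  set q : Polynomial ℝ := ∑ k : Fin s, Polynomial.C (x k - c k) * Polynomial.X ^ (k : ℕ)
    with hqdef
  have hqe : ∀ μ ∈ S, q.eval μ = 0 := by
    intro μ hmem
    obtain ⟨i, hi, rfl⟩ := (hSset μ).1 hmem
    have hsum : ∑ k : Fin s, (x k - c k) * lam i ^ (k : ℕ) = 0 := by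
      rcases mul_eq_zero.mp (hz i) with h | h
      · exact h
      · exact absurd h hi
    simp [hqdef, eval_finset_sum, hsum]
  have hdeg : q.natDegree < s := by
    have hle : q.natDegree ≤ s - 1 := by
      apply Polynomial.natDegree_sum_le_of_forall_le
      intro k _
      exact le_trans (Polynomial.natDegree_C_mul_X_pow_le _ _) (by omega)
    omega
  have hq0 : q = 0 :=
    Polynomial.eq_zero_of_natDegree_lt_card_of_eval_eq_zero' q S hqe (by rw [← hs]; exact hdeg)
  funext k
  have hco := congrArg (fun p => Polynomial.coeff p (k : ℕ)) hq0
  simp only [hqdef, Polynomial.finset_sum_coeff, Polynomial.coeff_C_mul,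
    Polynomial.coeff_X_pow, Polynomial.coeff_zero, mul_ite, mul_one, mul_zero] at hco
  simp only [Fin.val_inj, Finset.sum_ite_eq, Finset.mem_univ, if_true] at hco
  exact sub_eq_zero.mp hco
end
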